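/- arXiv:2101.04590 — 4 statements merged into one kernel-verified Lean document; each statement's English description precedes it below -/
import Mathlib

section
/- Let D be the biorientation of the graph obtained from the complete graph on t+2 vertices by deleting the edges of a 5-cycle (t ≥ 3). Then the dichromatic number of D equals t, but D does not contain the bioriented complete graph ↔K_t as a butterfly minor. -/
/-- Strong connectivity of the subdigraph induced on `S` by the digraph with arc relation `A`:
every ordered pair of vertices of `S` is joined by a directed path inside `S`. -/
def SConnOn {V : Type*} (A : V → V → Prop) (S : Set V) : Prop :=
  ∀ u ∈ S, ∀ v ∈ S, Relation.ReflTransGen (fun x y => x ∈ S ∧ y ∈ S ∧ A x y) u v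

/-- The subdigraph induced on `S` contains no directed cycle. -/
def AcyclicOn {V : Type*} (A : V → V → Prop) (S : Set V) : Prop :=
  ¬ ∃ u v, u ∈ S ∧ v ∈ S ∧ A u v ∧
      Relation.ReflTransGen (fun x y => x ∈ S ∧ y ∈ S ∧ A x y) v u

/-- The induced subdigraph on `S` admits an acyclic `k`-coloring. -/
def DiColorableOn {V : Type*} (A : V → V → Prop) (S : Set V) (k : ℕ) : Prop :=
  ∃ f : V → Fin k, ∀ c : Fin k, AcyclicOn A (S ∩ {v | f v = c})

/-- The digraph `(V, A)` admits an acyclic `k`-coloring. -/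
def DiColorable {V : Type*} (A : V → V → Prop) (k : ℕ) : Prop :=
  DiColorableOn A Set.univ k

/-- The dichromatic number of the digraph `(V, A)`, as an extended natural number. -/
noncomputable def diChromaticNumber {V : Type*} (A : V → V → Prop) : ℕ∞ :=
  sInf {n : ℕ∞ | ∃ k : ℕ, n = (k : ℕ∞) ∧ DiColorable A k}

/-- The digraph `(V, A)` contains the digraph `(W, B)` as a strong minor: a subdigraph of it
is a strong `(W, B)`-minor model, i.e. there are pairwise disjoint nonempty branch sets,
each inducing a strongly connected subdigraph, with an arc from `X w₁` to `X w₂`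
for every arc `(w₁, w₂)` of `B`. -/
def IsStrongMinor {V W : Type*} (A : V → V → Prop) (B : W → W → Prop) : Prop :=
  ∃ X : W → Set V,
    (∀ w, (X w).Nonempty) ∧
    (∀ w₁ w₂, w₁ ≠ w₂ → Disjoint (X w₁) (X w₂)) ∧
    (∀ w, SConnOn A (X w)) ∧
    (∀ w₁ w₂, B w₁ w₂ → ∃ x ∈ X w₁, ∃ y ∈ X w₂, A x y)

/-- A digraph with an explicit (possibly partial) vertex set, to support vertex deletions
and contractions. -/
structure Digr (V : Type*) where
  verts : Set V
  Arc : V → V → Prop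

/-- Delete a vertex. -/
def Digr.deleteVert {V : Type*} (D : Digr V) (v : V) : Digr V :=
  ⟨D.verts \ {v}, fun x y => D.Arc x y ∧ x ≠ v ∧ y ≠ v⟩

/-- Delete an arc. -/
def Digr.deleteArc {V : Type*} (D : Digr V) (u v : V) : Digr V :=
  ⟨D.verts, fun x y => D.Arc x y ∧ ¬(x = u ∧ y = v)⟩

/-- The arc `(u,v)` is butterfly-contractible: `v` is the only out-neighbour of `u`, or
`u` is the only in-neighbour of `v`. -/
def Digr.BflyContractible {V : Type*} (D : Digr V) (u v : V) : Prop :=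
  D.Arc u v ∧ u ≠ v ∧ ((∀ z, D.Arc u z → z = v) ∨ (∀ z, D.Arc z v → z = u))

/-- Contract the arc `(u,v)`, merging `v` into `u` and joining in- and out-neighbourhoods
(parallel arcs and loops are ignored). -/
def Digr.contract {V : Type*} (D : Digr V) (u v : V) : Digr V :=
  ⟨D.verts \ {v}, fun x y => x ≠ v ∧ y ≠ v ∧ x ≠ y ∧
    (D.Arc x y ∨ (x = u ∧ D.Arc v y) ∨ (y = u ∧ D.Arc x v))⟩

/-- One butterfly-minor operation: delete a vertex, delete an arc, or contract a
butterfly-contractible arc. -/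
def ButterflyStep {V : Type*} (D D' : Digr V) : Prop :=
  (∃ v, D' = D.deleteVert v) ∨
  (∃ u v, D.Arc u v ∧ D' = D.deleteArc u v) ∨
  (∃ u v, D.BflyContractible u v ∧ D' = D.contract u v)

/-- `D` contains the digraph `(W, B)` as a butterfly minor. -/
def IsButterflyMinor {V W : Type*} (D : Digr V) (B : W → W → Prop) : Prop :=
  ∃ D' : Digr V, Relation.ReflTransGen ButterflyStep D D' ∧
    ∃ φ : W → V, Function.Injective φ ∧ (∀ w, φ w ∈ D'.verts) ∧
      ∀ a b, B a b → D'.Arc (φ a) (φ b)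

/-- The biorientation of the complete graph on `t + 2` vertices with the edges of a
`5`-cycle (on the first five vertices) removed. -/
def KminusC5Arc (t : ℕ) (u v : Fin (t + 2)) : Prop :=
  u ≠ v ∧ ¬ ((u.val < 5 ∧ v.val < 5) ∧
    ((u.val + 1) % 5 = v.val ∨ (v.val + 1) % 5 = u.val))


namespace St7
variable {t : ℕ}

lemma KArc_symm {u v : Fin (t+2)} (h : KminusC5Arc t u v) : KminusC5Arc t v u :=
  ⟨h.1.symm, fun hc => h.2 ⟨⟨hc.1.2, hc.1.1⟩, hc.2.symm⟩⟩

lemma L1five : ∀ a b c : Fin 5,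
    (a ≠ b ∧ ¬((a.val + 1) % 5 = b.val ∨ (b.val + 1) % 5 = a.val)) →
    (b ≠ c ∧ ¬((b.val + 1) % 5 = c.val ∨ (c.val + 1) % 5 = b.val)) →
    (a ≠ c ∧ ¬((a.val + 1) % 5 = c.val ∨ (c.val + 1) % 5 = a.val)) → False := by decide

lemma L2five : ∀ s a b c : Fin 5, a ≠ b → a ≠ c → b ≠ c →
    (s ≠ a ∧ ¬((s.val + 1) % 5 = a.val ∨ (a.val + 1) % 5 = s.val)) →
    (s ≠ b ∧ ¬((s.val + 1) % 5 = b.val ∨ (b.val + 1) % 5 = s.val)) →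
    (s ≠ c ∧ ¬((s.val + 1) % 5 = c.val ∨ (c.val + 1) % 5 = s.val)) → False := by decide


lemma mkne {n : ℕ} {a b : ℕ} {ha : a < n} {hb : b < n} (h : a ≠ b) :
    (⟨a, ha⟩ : Fin n) ≠ ⟨b, hb⟩ := fun hh => h (congrArg Fin.val hh)

lemma arc_pent {u v : Fin (t+2)} (h : KminusC5Arc t u v) (hu : u.val < 5) (hv : v.val < 5) :
    u.val ≠ v.val ∧ ¬((u.val + 1) % 5 = v.val ∨ (v.val + 1) % 5 = u.val) := by
  refine ⟨fun hh => h.1 (Fin.ext hh), fun hh => h.2 ⟨⟨hu, hv⟩, hh⟩⟩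

/-- No triangle among cycle vertices. -/
lemma L1 {a b c : Fin (t+2)} (ha : a.val < 5) (hb : b.val < 5) (hc : c.val < 5)
    (h1 : KminusC5Arc t a b) (h2 : KminusC5Arc t b c) (h3 : KminusC5Arc t a c) : False := by
  have p1 := arc_pent h1 ha hb
  have p2 := arc_pent h2 hb hc
  have p3 := arc_pent h3 ha hc
  exact L1five ⟨a.val, ha⟩ ⟨b.val, hb⟩ ⟨c.val, hc⟩
    ⟨mkne p1.1, p1.2⟩
    ⟨mkne p2.1, p2.2⟩
    ⟨mkne p3.1, p3.2⟩

/-- No cycle vertex with three distinct cycle neighbours. -/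
lemma L2 {s a b c : Fin (t+2)} (hs : s.val < 5) (ha : a.val < 5) (hb : b.val < 5)
    (hc : c.val < 5) (hab : a ≠ b) (hac : a ≠ c) (hbc : b ≠ c)
    (h1 : KminusC5Arc t s a) (h2 : KminusC5Arc t s b) (h3 : KminusC5Arc t s c) : False := by
  have p1 := arc_pent h1 hs ha
  have p2 := arc_pent h2 hs hb
  have p3 := arc_pent h3 hs hc
  refine L2five ⟨s.val, hs⟩ ⟨a.val, ha⟩ ⟨b.val, hb⟩ ⟨c.val, hc⟩
    (mkne (Fin.val_ne_of_ne hab)) (mkne (Fin.val_ne_of_ne hac))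
    (mkne (Fin.val_ne_of_ne hbc))
    ⟨mkne p1.1, p1.2⟩
    ⟨mkne p2.1, p2.2⟩
    ⟨mkne p3.1, p3.2⟩


inductive Shape (t : ℕ) : Finset (Fin (t+2)) → Finset (Fin (t+2)) → Finset (Fin (t+2)) → Prop
  | base (a : Fin (t+2)) : Shape t {a} {a} {a}
  | step1 {ω1 ι1 β1 ω2 ι2 β2 : Finset (Fin (t+2))} :
      Shape t ω1 ι1 β1 → Shape t ω2 ι2 β2 → Disjoint β1 β2 →
      (∃ x ∈ ω1, ∃ y ∈ ι2, KminusC5Arc t x y) → Shape t ω2 (ι1 ∪ ι2) (β1 ∪ β2)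
  | step2 {ω1 ι1 β1 ω2 ι2 β2 : Finset (Fin (t+2))} :
      Shape t ω1 ι1 β1 → Shape t ω2 ι2 β2 → Disjoint β1 β2 →
      (∃ x ∈ ω1, ∃ y ∈ ι2, KminusC5Arc t x y) → Shape t (ω1 ∪ ω2) ι1 (β1 ∪ β2)

lemma Shape.nonempty {ω ι β : Finset (Fin (t+2))} (h : Shape t ω ι β) : β.Nonempty := by
  induction h with
  | base a => exact ⟨a, Finset.mem_singleton_self a⟩
  | step1 _ _ _ _ ih1 ih2 => exact ih1.mono Finset.subset_union_left
  | step2 _ _ _ _ ih1 ih2 => exact ih1.mono Finset.subset_union_left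

lemma Shape.omega_subset {ω ι β : Finset (Fin (t+2))} (h : Shape t ω ι β) : ω ⊆ β := by
  induction h with
  | base a => exact Finset.Subset.refl _
  | step1 _ _ _ _ ih1 ih2 => exact ih2.trans Finset.subset_union_right
  | step2 _ _ _ _ ih1 ih2 => exact Finset.union_subset_union ih1 ih2
lemma Shape.io_subset {ω ι β : Finset (Fin (t+2))} (h : Shape t ω ι β) : ι ⊆ β := by
  induction h with
  | base a => exact Finset.Subset.refl _
  | step1 _ _ _ _ ih1 ih2 => exact Finset.union_subset_union ih1 ih2
  | step2 _ _ _ _ ih1 ih2 => exact ih1.trans Finset.subset_union_left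

lemma Shape.card1 {ω ι β : Finset (Fin (t+2))} (h : Shape t ω ι β) (hc : β.card = 1) :
    ∃ a, ω = {a} ∧ ι = {a} ∧ β = {a} := by
  cases h with
  | base a => exact ⟨a, rfl, rfl, rfl⟩
  | step1 h1 h2 hd hl =>
      rw [Finset.card_union_of_disjoint hd] at hc
      have := h1.nonempty.card_pos; have := h2.nonempty.card_pos; omega
  | step2 h1 h2 hd hl =>
      rw [Finset.card_union_of_disjoint hd] at hc
      have := h1.nonempty.card_pos; have := h2.nonempty.card_pos; omega

lemma Shape.card2 {ω ι β : Finset (Fin (t+2))} (h : Shape t ω ι β) (hc : β.card = 2) :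
    ∃ s u : Fin (t+2), s ≠ u ∧ β = {s, u} ∧ KminusC5Arc t s u ∧
      ((ω = {s} ∧ ι = {s, u}) ∨ (ι = {s} ∧ ω = {s, u})) := by
  cases h with
  | base a => simp at hc
  | step1 h1 h2 hd hl =>
      rw [Finset.card_union_of_disjoint hd] at hc
      have c1 := h1.nonempty.card_pos; have c2 := h2.nonempty.card_pos
      obtain ⟨p, hω1, hι1, hβ1⟩ := h1.card1 (by omega)
      obtain ⟨q, hω2, hι2, hβ2⟩ := h2.card1 (by omega)
      subst hω1; subst hι1; subst hβ1; subst hω2; subst hι2; subst hβ2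
      obtain ⟨x, hx, y, hy, hxy⟩ := hl
      rw [Finset.mem_singleton] at hx hy
      rw [hx, hy] at hxy
      have hpq : p ≠ q := Finset.disjoint_singleton.mp hd
      exact ⟨q, p, hpq.symm, by ext z; simp; tauto,
        KArc_symm hxy,
        Or.inl ⟨rfl, by ext z; simp; tauto⟩⟩
  | step2 h1 h2 hd hl =>
      rw [Finset.card_union_of_disjoint hd] at hc
      have c1 := h1.nonempty.card_pos; have c2 := h2.nonempty.card_pos
      obtain ⟨p, hω1, hι1, hβ1⟩ := h1.card1 (by omega)
      obtain ⟨q, hω2, hι2, hβ2⟩ := h2.card1 (by omega)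
      subst hω1; subst hι1; subst hβ1; subst hω2; subst hι2; subst hβ2
      obtain ⟨x, hx, y, hy, hxy⟩ := hl
      rw [Finset.mem_singleton] at hx hy
      rw [hx, hy] at hxy
      have hpq : p ≠ q := Finset.disjoint_singleton.mp hd
      exact ⟨p, q, hpq, by ext z; simp, hxy,
        Or.inr ⟨rfl, by ext z; simp⟩⟩

lemma Shape.card3 {ω ι β : Finset (Fin (t+2))} (h : Shape t ω ι β) (hc : β.card = 3) :
    ∃ ω1 ι1 β1 ω2 ι2 β2 : Finset (Fin (t+2)), Shape t ω1 ι1 β1 ∧ Shape t ω2 ι2 β2 ∧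
      Disjoint β1 β2 ∧ (∃ x ∈ ω1, ∃ y ∈ ι2, KminusC5Arc t x y) ∧ β = β1 ∪ β2 ∧
      ((ω = ω2 ∧ ι = ι1 ∪ ι2) ∨ (ω = ω1 ∪ ω2 ∧ ι = ι1)) ∧
      ((β1.card = 1 ∧ β2.card = 2) ∨ (β1.card = 2 ∧ β2.card = 1)) := by
  cases h with
  | base a => simp at hc
  | step1 h1 h2 hd hl =>
      rw [Finset.card_union_of_disjoint hd] at hc
      have c1 := h1.nonempty.card_pos; have c2 := h2.nonempty.card_pos
      exact ⟨_, _, _, _, _, _, h1, h2, hd, hl, rfl, Or.inl ⟨rfl, rfl⟩, by omega⟩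
  | step2 h1 h2 hd hl =>
      rw [Finset.card_union_of_disjoint hd] at hc
      have c1 := h1.nonempty.card_pos; have c2 := h2.nonempty.card_pos
      exact ⟨_, _, _, _, _, _, h1, h2, hd, hl, rfl, Or.inr ⟨rfl, rfl⟩, by omega⟩


lemma cardC (ht : 3 ≤ t) :
    ((Finset.univ : Finset (Fin (t+2))).filter (fun v => v.val < 5)).card = 5 := by
  have h5 : (5 : ℕ) ≤ t + 2 := by omega
  have h : ((Finset.univ : Finset (Fin (t+2))).filter (fun v => v.val < 5)) =
      (Finset.univ : Finset (Fin 5)).image (Fin.castLE h5) := by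
    ext x
    simp only [Finset.mem_filter, Finset.mem_univ, true_and, Finset.mem_image]
    constructor
    · intro hx; exact ⟨⟨x.val, hx⟩, Fin.ext rfl⟩
    · rintro ⟨i, rfl⟩; exact i.isLt
  rw [h, Finset.card_image_of_injective _ (Fin.castLE_injective h5)]
  simp

lemma core (ht : 3 ≤ t) (B Ω Io : Fin t → Finset (Fin (t+2)))
    (hsh : ∀ i, Shape t (Ω i) (Io i) (B i))
    (hdisj : ∀ i j, i ≠ j → Disjoint (B i) (B j))
    (hlink : ∀ i j, i ≠ j → ∃ a ∈ Ω i, ∃ b ∈ Io j, KminusC5Arc t a b) : False := by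
  classical
  set C : Finset (Fin (t+2)) := Finset.univ.filter (fun v => v.val < 5) with hCdef
  have hCmem : ∀ x : Fin (t+2), x ∈ C ↔ x.val < 5 := by
    intro x; simp [hCdef]
  have hC5 : C.card = 5 := cardC ht
  have hne : ∀ {i j : Fin t} {x y : Fin (t+2)}, i ≠ j → x ∈ B i → y ∈ B j → x ≠ y := by
    intro i j x y hij hx hy h
    exact Finset.disjoint_left.mp (hdisj i j hij) hx (h ▸ hy)
  have hb1 : ∀ i, 1 ≤ (B i).card := fun i => (hsh i).nonempty.card_pos
  have hcb : ∀ i, (B i ∩ C).card ≤ (B i).card :=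
    fun i => Finset.card_le_card Finset.inter_subset_left
  have hdisj' : ∀ i ∈ (Finset.univ : Finset (Fin t)), ∀ j ∈ (Finset.univ : Finset (Fin t)),
      i ≠ j → Disjoint (B i) (B j) := fun i _ j _ h => hdisj i j h
  have hsumb : ∑ i, (B i).card ≤ t + 2 := by
    rw [← Finset.card_biUnion hdisj']
    calc (Finset.univ.biUnion B).card
        ≤ (Finset.univ : Finset (Fin (t+2))).card := Finset.card_le_card (Finset.subset_univ _)
      _ = t + 2 := by simp
  have hsumc : (∑ i, (B i ∩ C).card) + t ≥ (∑ i, (B i).card) + 3 := by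
    have hd2 : ∀ i ∈ (Finset.univ : Finset (Fin t)), ∀ j ∈ (Finset.univ : Finset (Fin t)),
        i ≠ j → Disjoint (B i ∩ C) (B j ∩ C) :=
      fun i _ j _ h => (hdisj i j h).mono Finset.inter_subset_left Finset.inter_subset_left
    have e1 : ∑ i, (B i ∩ C).card = (C ∩ (Finset.univ.biUnion B)).card := by
      rw [← Finset.card_biUnion hd2]
      congr 1
      ext x
      simp only [Finset.mem_biUnion, Finset.mem_inter, Finset.mem_univ, true_and]
      tauto
    have e2 : ∑ i, (B i).card = (Finset.univ.biUnion B).card := (Finset.card_biUnion hdisj').symm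
    set U := Finset.univ.biUnion B with hU
    have p1 : (C ∩ U).card + (C \ U).card = C.card := Finset.card_inter_add_card_sdiff C U
    have p2 : (C \ U).card ≤ (Finset.univ \ U).card :=
      Finset.card_le_card (fun x hx => by
        simp only [Finset.mem_sdiff, Finset.mem_univ, true_and] at hx ⊢; exact hx.2)
    have p3 : (Finset.univ \ U).card = (t+2) - U.card := by
      rw [Finset.card_sdiff_of_subset (Finset.subset_univ _)]; simp
    have p4 : U.card ≤ t + 2 := by
      calc U.card ≤ (Finset.univ : Finset (Fin (t+2))).card :=
            Finset.card_le_card (Finset.subset_univ _)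
        _ = t + 2 := by simp
    omega
  -- singleton data
  have singdata : ∀ i : Fin t, (B i).card = 1 → (B i ∩ C).card = 1 →
      ∃ d : Fin (t+2), B i = {d} ∧ Ω i = {d} ∧ Io i = {d} ∧ d.val < 5 := by
    intro i hb hc
    obtain ⟨d, hΩ, hIo, hB⟩ := (hsh i).card1 hb
    refine ⟨d, hB, hΩ, hIo, ?_⟩
    rw [hB] at hc
    by_contra hd5
    have : ({d} : Finset (Fin (t+2))) ∩ C = ∅ := by
      apply Finset.eq_empty_of_forall_notMem
      intro x hx
      simp only [Finset.mem_inter, Finset.mem_singleton] at hx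
      exact hd5 (hx.1 ▸ (hCmem x).mp hx.2)
    rw [this] at hc
    simp at hc
  -- arc between two singleton branch sets
  have singlink : ∀ {i j : Fin t} {d e : Fin (t+2)}, i ≠ j → Ω i = {d} → Io j = {e} →
      KminusC5Arc t d e := by
    intro i j d e hij hΩ hIo
    obtain ⟨a, ha, bb, hbb, hab⟩ := hlink i j hij
    rw [hΩ, Finset.mem_singleton] at ha
    rw [hIo, Finset.mem_singleton] at hbb
    rwa [ha, hbb] at hab
  -- side arc: a branch set whose Ω or Io is the singleton {s} is linked to every singleton set
  have sidearc : ∀ {j i : Fin t} {s d : Fin (t+2)}, j ≠ i → (Ω j = {s} ∨ Io j = {s}) →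
      Ω i = {d} → Io i = {d} → KminusC5Arc t s d := by
    intro j i s d hji hside hΩ hIo
    rcases hside with h | h
    · exact singlink hji h hIo
    · exact KArc_symm (singlink hji.symm hΩ h)
  -- at most two singleton-cycle branch sets
  set Sing : Finset (Fin t) :=
    Finset.univ.filter (fun i => (B i).card = 1 ∧ (B i ∩ C).card = 1) with hSdef
  have hSing2 : Sing.card ≤ 2 := by
    by_contra hgt
    push_neg at hgt
    obtain ⟨i, j, k, hi, hj, hk, hij, hik, hjk⟩ := Finset.two_lt_card_iff.mp hgt
    simp only [hSdef, Finset.mem_filter, Finset.mem_univ, true_and] at hi hj hk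
    obtain ⟨d, hBd, hΩd, hIod, hd5⟩ := singdata i hi.1 hi.2
    obtain ⟨e, hBe, hΩe, hIoe, he5⟩ := singdata j hj.1 hj.2
    obtain ⟨f, hBf, hΩf, hIof, hf5⟩ := singdata k hk.1 hk.2
    exact L1 hd5 he5 hf5 (singlink hij hΩd hIoe) (singlink hjk hΩe hIof)
      (singlink hik hΩd hIof)
  have singmem : ∀ i ∈ Sing, (B i).card = 1 ∧ (B i ∩ C).card = 1 := by
    intro i hi
    simpa only [hSdef, Finset.mem_filter, Finset.mem_univ, true_and] using hi
  have subC : ∀ m : Fin t, (B m ∩ C).card = (B m).card → B m ⊆ C := by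
    intro m hm x hx
    have heq := Finset.eq_of_subset_of_card_le
      (Finset.inter_subset_left : B m ∩ C ⊆ B m) (le_of_eq hm.symm)
    rw [← heq] at hx
    exact (Finset.mem_inter.mp hx).2
  -- the pair-plus-two-singletons argument
  have pairarg : ∀ (j i1 i2 : Fin t), j ≠ i1 → j ≠ i2 → i1 ≠ i2 → (B j).card = 2 →
      B j ⊆ C → i1 ∈ Sing → i2 ∈ Sing → False := by
    intro j i1 i2 hj1 hj2 h12 hbj hjC hi1 hi2
    obtain ⟨hb1', hc1'⟩ := singmem i1 hi1
    obtain ⟨hb2', hc2'⟩ := singmem i2 hi2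
    obtain ⟨d, hBd, hΩd, hIod, hd5⟩ := singdata i1 hb1' hc1'
    obtain ⟨e, hBe, hΩe, hIoe, he5⟩ := singdata i2 hb2' hc2'
    obtain ⟨sv, u, hsu, hBj, hAsu, hcase⟩ := (hsh j).card2 hbj
    have hsmem : sv ∈ B j := by rw [hBj]; exact Finset.mem_insert_self _ _
    have humem : u ∈ B j := by
      rw [hBj]; exact Finset.mem_insert_of_mem (Finset.mem_singleton_self u)
    have hside : Ω j = {sv} ∨ Io j = {sv} := by
      rcases hcase with ⟨h, -⟩ | ⟨h, -⟩
      exacts [Or.inl h, Or.inr h]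
    have hAsd := sidearc hj1 hside hΩd hIod
    have hAse := sidearc hj2 hside hΩe hIoe
    have hsC : sv.val < 5 := (hCmem _).mp (hjC hsmem)
    have huC : u.val < 5 := (hCmem _).mp (hjC humem)
    have hud : u ≠ d := hne hj1 humem (by rw [hBd]; exact Finset.mem_singleton_self d)
    have hue : u ≠ e := hne hj2 humem (by rw [hBe]; exact Finset.mem_singleton_self e)
    have hde : d ≠ e := hne h12 (by rw [hBd]; exact Finset.mem_singleton_self d)
      (by rw [hBe]; exact Finset.mem_singleton_self e)
    exact L2 hsC huC hd5 he5 hud hue hde hAsu hAsd hAse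
  -- the triple-plus-two-singletons argument
  have triplearg : ∀ (j i1 i2 : Fin t), j ≠ i1 → j ≠ i2 → i1 ≠ i2 → (B j).card = 3 →
      B j ⊆ C → i1 ∈ Sing → i2 ∈ Sing → False := by
    intro j i1 i2 hj1 hj2 h12 hbj hjC hi1 hi2
    obtain ⟨hb1', hc1'⟩ := singmem i1 hi1
    obtain ⟨hb2', hc2'⟩ := singmem i2 hi2
    obtain ⟨d, hBd, hΩd, hIod, hd5⟩ := singdata i1 hb1' hc1'
    obtain ⟨e, hBe, hΩe, hIoe, he5⟩ := singdata i2 hb2' hc2'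
    have hdmem : d ∈ B i1 := by rw [hBd]; exact Finset.mem_singleton_self d
    have hemem : e ∈ B i2 := by rw [hBe]; exact Finset.mem_singleton_self e
    have hde : d ≠ e := hne h12 hdmem hemem
    have hAde : KminusC5Arc t d e := singlink h12 hΩd hIoe
    obtain ⟨ω1, ι1, β1, ω2, ι2, β2, hs1, hs2, hd12, hl12, hβ, hrule, hcards⟩ :=
      (hsh j).card3 hbj
    rcases hcards with ⟨hcard1, hcard2⟩ | ⟨hcard1, hcard2⟩
    · -- β1 singleton {c0}, β2 pair {sv, u}
      obtain ⟨c0, hω1, hι1, hβ1⟩ := hs1.card1 hcard1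
      obtain ⟨sv, u, hsu, hβ2, hAsu, hpair⟩ := hs2.card2 hcard2
      have hc0B : c0 ∈ B j := by
        rw [hβ]; exact Finset.mem_union_left _ (by rw [hβ1]; exact Finset.mem_singleton_self _)
      have hsB : sv ∈ B j := by
        rw [hβ]; exact Finset.mem_union_right _ (by rw [hβ2]; exact Finset.mem_insert_self _ _)
      have huB : u ∈ B j := by
        rw [hβ]
        exact Finset.mem_union_right _
          (by rw [hβ2]; exact Finset.mem_insert_of_mem (Finset.mem_singleton_self u))
      have hc05 : c0.val < 5 := (hCmem _).mp (hjC hc0B)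
      have hs5 : sv.val < 5 := (hCmem _).mp (hjC hsB)
      have hu5 : u.val < 5 := (hCmem _).mp (hjC huB)
      have hc0u : c0 ≠ u := by
        intro h
        exact Finset.disjoint_left.mp hd12 (by rw [hβ1]; exact Finset.mem_singleton_self _)
          (by rw [hβ2, h]; exact Finset.mem_insert_of_mem (Finset.mem_singleton_self _))
      have hud : u ≠ d := hne hj1 huB hdmem
      have hue : u ≠ e := hne hj2 huB hemem
      have hsd : sv ≠ d := hne hj1 hsB hdmem
      have hse : sv ≠ e := hne hj2 hsB hemem
      have hc0d : c0 ≠ d := hne hj1 hc0B hdmem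
      have hc0e : c0 ≠ e := hne hj2 hc0B hemem
      rcases hrule with ⟨hΩj, hIoj⟩ | ⟨hΩj, hIoj⟩
      · rcases hpair with ⟨hω2, hι2⟩ | ⟨hι2, hω2⟩
        · have hside : Ω j = {sv} ∨ Io j = {sv} := Or.inl (hΩj.trans hω2)
          have hAsd := sidearc hj1 hside hΩd hIod
          have hAse := sidearc hj2 hside hΩe hIoe
          exact L2 hs5 hu5 hd5 he5 hud hue hde hAsu hAsd hAse
        · obtain ⟨x, hx, y, hy, hxy⟩ := hl12
          rw [hω1, Finset.mem_singleton] at hx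
          rw [hι2, Finset.mem_singleton] at hy
          rw [hx, hy] at hxy
          obtain ⟨a, ha, bb, hbb, habd⟩ := hlink j i1 hj1
          rw [hΩj, hω2] at ha
          rw [hIod, Finset.mem_singleton] at hbb
          rw [hbb] at habd
          rcases Finset.mem_insert.mp ha with h | h
          · rw [h] at habd
            exact L2 hs5 hu5 hc05 hd5 hc0u.symm hud hc0d hAsu (KArc_symm hxy) habd
          · rw [Finset.mem_singleton] at h
            rw [h] at habd
            obtain ⟨a2, ha2, bb2, hbb2, habe⟩ := hlink j i2 hj2
            rw [hΩj, hω2] at ha2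
            rw [hIoe, Finset.mem_singleton] at hbb2
            rw [hbb2] at habe
            rcases Finset.mem_insert.mp ha2 with h2 | h2
            · rw [h2] at habe
              exact L2 hs5 hu5 hc05 he5 hc0u.symm hue hc0e hAsu (KArc_symm hxy) habe
            · rw [Finset.mem_singleton] at h2
              rw [h2] at habe
              exact L2 hu5 hs5 hd5 he5 hsd hse hde (KArc_symm hAsu) habd habe
      · have hIoj' : Io j = {c0} := hIoj.trans hι1
        obtain ⟨a, ha, bb, hbb, hadc⟩ := hlink i1 j (Ne.symm hj1)
        rw [hΩd, Finset.mem_singleton] at ha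
        rw [hIoj', Finset.mem_singleton] at hbb
        rw [ha, hbb] at hadc
        obtain ⟨a2, ha2, bb2, hbb2, haec⟩ := hlink i2 j (Ne.symm hj2)
        rw [hΩe, Finset.mem_singleton] at ha2
        rw [hIoj', Finset.mem_singleton] at hbb2
        rw [ha2, hbb2] at haec
        exact L1 hd5 he5 hc05 hAde haec hadc
    · -- β1 pair {sv, u}, β2 singleton {c0}
      obtain ⟨sv, u, hsu, hβ1, hAsu, hpair⟩ := hs1.card2 hcard1
      obtain ⟨c0, hω2, hι2, hβ2⟩ := hs2.card1 hcard2
      have hc0B : c0 ∈ B j := by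
        rw [hβ]; exact Finset.mem_union_right _ (by rw [hβ2]; exact Finset.mem_singleton_self _)
      have hsB : sv ∈ B j := by
        rw [hβ]; exact Finset.mem_union_left _ (by rw [hβ1]; exact Finset.mem_insert_self _ _)
      have huB : u ∈ B j := by
        rw [hβ]
        exact Finset.mem_union_left _
          (by rw [hβ1]; exact Finset.mem_insert_of_mem (Finset.mem_singleton_self u))
      have hc05 : c0.val < 5 := (hCmem _).mp (hjC hc0B)
      have hs5 : sv.val < 5 := (hCmem _).mp (hjC hsB)
      have hu5 : u.val < 5 := (hCmem _).mp (hjC huB)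
      have huc0 : u ≠ c0 := by
        intro h
        exact Finset.disjoint_left.mp hd12
          (by rw [hβ1]; exact Finset.mem_insert_of_mem (Finset.mem_singleton_self u))
          (by rw [hβ2, ← h]; exact Finset.mem_singleton_self _)
      have hud : u ≠ d := hne hj1 huB hdmem
      have hue : u ≠ e := hne hj2 huB hemem
      have hsd : sv ≠ d := hne hj1 hsB hdmem
      have hse : sv ≠ e := hne hj2 hsB hemem
      have hc0d : c0 ≠ d := hne hj1 hc0B hdmem
      have hc0e : c0 ≠ e := hne hj2 hc0B hemem
      rcases hrule with ⟨hΩj, hIoj⟩ | ⟨hΩj, hIoj⟩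
      · have hΩj' : Ω j = {c0} := hΩj.trans hω2
        obtain ⟨a, ha, bb, hbb, hacd⟩ := hlink j i1 hj1
        rw [hΩj', Finset.mem_singleton] at ha
        rw [hIod, Finset.mem_singleton] at hbb
        rw [ha, hbb] at hacd
        obtain ⟨a2, ha2, bb2, hbb2, hace⟩ := hlink j i2 hj2
        rw [hΩj', Finset.mem_singleton] at ha2
        rw [hIoe, Finset.mem_singleton] at hbb2
        rw [ha2, hbb2] at hace
        exact L1 hc05 hd5 he5 hacd hAde hace
      · rcases hpair with ⟨hω1, hι1⟩ | ⟨hι1, hω1⟩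
        · obtain ⟨x, hx, y, hy, hxy⟩ := hl12
          rw [hω1, Finset.mem_singleton] at hx
          rw [hι2, Finset.mem_singleton] at hy
          rw [hx, hy] at hxy
          have hIoj' : Io j = {sv, u} := hIoj.trans hι1
          obtain ⟨a, ha, bb, hbb, hady⟩ := hlink i1 j (Ne.symm hj1)
          rw [hΩd, Finset.mem_singleton] at ha
          rw [hIoj'] at hbb
          rw [ha] at hady
          rcases Finset.mem_insert.mp hbb with h | h
          · rw [h] at hady
            exact L2 hs5 hu5 hc05 hd5 huc0 hud hc0d hAsu hxy (KArc_symm hady)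
          · rw [Finset.mem_singleton] at h
            rw [h] at hady
            obtain ⟨a2, ha2, bb2, hbb2, haey⟩ := hlink i2 j (Ne.symm hj2)
            rw [hΩe, Finset.mem_singleton] at ha2
            rw [hIoj'] at hbb2
            rw [ha2] at haey
            rcases Finset.mem_insert.mp hbb2 with h2 | h2
            · rw [h2] at haey
              exact L2 hs5 hu5 hc05 he5 huc0 hue hc0e hAsu hxy (KArc_symm haey)
            · rw [Finset.mem_singleton] at h2
              rw [h2] at haey
              exact L2 hu5 hs5 hd5 he5 hsd hse hde (KArc_symm hAsu) (KArc_symm hady)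
                (KArc_symm haey)
        · have hside : Ω j = {sv} ∨ Io j = {sv} := Or.inr (hIoj.trans hι1)
          have hAsd := sidearc hj1 hside hΩd hIod
          have hAse := sidearc hj2 hside hΩe hIoe
          exact L2 hs5 hu5 hd5 he5 hud hue hde hAsu hAsd hAse
  -- bookkeeping on big branch sets
  set Big : Finset (Fin t) := Finset.univ.filter (fun i => 2 ≤ (B i).card) with hBdef
  set Nb : Finset (Fin t) := Finset.univ.filter (fun i => ¬ 2 ≤ (B i).card) with hNdef
  have hsplitb : (∑ i ∈ Big, (B i).card) + (∑ i ∈ Nb, (B i).card) = ∑ i, (B i).card :=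
    Finset.sum_filter_add_sum_filter_not _ _ _
  have hsplitc : (∑ i ∈ Big, (B i ∩ C).card) + (∑ i ∈ Nb, (B i ∩ C).card)
      = ∑ i, (B i ∩ C).card :=
    Finset.sum_filter_add_sum_filter_not _ _ _
  have hNb1 : ∀ i ∈ Nb, (B i).card = 1 := by
    intro i hi
    simp only [hNdef, Finset.mem_filter, Finset.mem_univ, true_and] at hi
    have := hb1 i; omega
  have hNbb : ∑ i ∈ Nb, (B i).card = Nb.card := by
    rw [Finset.sum_congr rfl hNb1, Finset.sum_const, smul_eq_mul, mul_one]
  have hNbc : ∑ i ∈ Nb, (B i ∩ C).card = Sing.card := by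
    have h1 : ∀ i ∈ Nb, (B i ∩ C).card = if (B i ∩ C).card = 1 then 1 else 0 := by
      intro i hi
      have h2 := hcb i
      have h3 := hNb1 i hi
      by_cases h : (B i ∩ C).card = 1
      · rw [if_pos h]; exact h
      · rw [if_neg h]; omega
    rw [Finset.sum_congr rfl h1]
    rw [Finset.sum_boole]
    have heq : Nb.filter (fun i => (B i ∩ C).card = 1) = Sing := by
      ext i
      simp only [hNdef, hSdef, Finset.mem_filter, Finset.mem_univ, true_and]
      have := hb1 i
      omega
    rw [heq]
    simp
  have hcardsplit : Big.card + Nb.card = t := by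
    have h := Finset.card_filter_add_card_filter_not
      (s := (Finset.univ : Finset (Fin t))) (p := fun i => 2 ≤ (B i).card)
    rw [← hBdef] at h
    rw [show (Finset.filter (fun a => ¬ 2 ≤ (B a).card) Finset.univ) = Nb from rfl] at h
    simpa using h
  have hBig2 : ∀ i ∈ Big, 2 ≤ (B i).card := by
    intro i hi
    simpa only [hBdef, Finset.mem_filter, Finset.mem_univ, true_and] using hi
  have hBigsum : 2 * Big.card ≤ ∑ i ∈ Big, (B i).card := by
    calc 2 * Big.card = ∑ _i ∈ Big, 2 := by rw [Finset.sum_const, smul_eq_mul, mul_comm]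
      _ ≤ _ := Finset.sum_le_sum hBig2
  have key : (∑ i ∈ Big, (B i ∩ C).card) + Sing.card + Big.card
      ≥ (∑ i ∈ Big, (B i).card) + 3 := by omega
  have hSBb : (∑ i ∈ Big, (B i).card) ≤ Big.card + 2 := by omega
  have hsingne : ∀ i ∈ Sing, ∀ j ∈ Big, j ≠ i := by
    intro i hi j hj heq
    have h1 := (singmem i hi).1
    have h2 := hBig2 j hj
    rw [heq] at h2
    omega
  have hk2 : Big.card ≤ 2 := by omega
  rcases (by omega : Big.card = 0 ∨ Big.card = 1 ∨ Big.card = 2) with h0 | h1 | h2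
  · rw [h0, Finset.card_eq_zero.mp h0] at key
    simp only [Finset.sum_empty] at key
    omega
  · obtain ⟨j, hjeq⟩ := Finset.card_eq_one.mp h1
    rw [h1, hjeq] at key hSBb
    simp only [Finset.sum_singleton] at key hSBb
    have hjBig : j ∈ Big := by rw [hjeq]; exact Finset.mem_singleton_self j
    have hbj2 : 2 ≤ (B j).card := hBig2 j hjBig
    have hcbj := hcb j
    have hcj : (B j ∩ C).card = (B j).card := by omega
    have hjC : B j ⊆ C := subC j hcj
    obtain ⟨i1, hi1, i2, hi2, h12⟩ := Finset.one_lt_card.mp (show 1 < Sing.card by omega)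
    have hji1 := hsingne i1 hi1 j hjBig
    have hji2 := hsingne i2 hi2 j hjBig
    rcases (by omega : (B j).card = 2 ∨ (B j).card = 3) with hb2 | hb3
    · exact pairarg j i1 i2 hji1 hji2 h12 hb2 hjC hi1 hi2
    · exact triplearg j i1 i2 hji1 hji2 h12 hb3 hjC hi1 hi2
  · obtain ⟨j, l, hjl, hjleq⟩ := Finset.card_eq_two.mp h2
    rw [h2, hjleq] at key hSBb
    simp only [Finset.sum_pair hjl] at key hSBb
    have hjBig : j ∈ Big := by rw [hjleq]; exact Finset.mem_insert_self _ _
    have hlBig : l ∈ Big := by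
      rw [hjleq]; exact Finset.mem_insert_of_mem (Finset.mem_singleton_self _)
    have hbjge := hBig2 j hjBig
    have hblge := hBig2 l hlBig
    have hbj2 : (B j).card = 2 := by omega
    have hbl2 : (B l).card = 2 := by omega
    have hcbj := hcb j
    have hcbl := hcb l
    by_cases hboth : (B j ∩ C).card = 2 ∧ (B l ∩ C).card = 2
    · -- two pairs inside the cycle, plus one singleton
      obtain ⟨i1, hi1⟩ := Finset.card_pos.mp (show 0 < Sing.card by omega)
      have hji1 := hsingne i1 hi1 j hjBig
      have hli1 := hsingne i1 hi1 l hlBig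
      obtain ⟨hb1', hc1'⟩ := singmem i1 hi1
      obtain ⟨d, hBd, hΩd, hIod, hd5⟩ := singdata i1 hb1' hc1'
      have hdmem : d ∈ B i1 := by rw [hBd]; exact Finset.mem_singleton_self d
      have hjC : B j ⊆ C := subC j (by omega)
      have hlC : B l ⊆ C := subC l (by omega)
      obtain ⟨s1, u1, hsu1, hBj, hAsu1, hcase1⟩ := (hsh j).card2 hbj2
      have hs1mem : s1 ∈ B j := by rw [hBj]; exact Finset.mem_insert_self _ _
      have hu1mem : u1 ∈ B j := by
        rw [hBj]; exact Finset.mem_insert_of_mem (Finset.mem_singleton_self _)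
      have hside1 : Ω j = {s1} ∨ Io j = {s1} := by
        rcases hcase1 with ⟨h, -⟩ | ⟨h, -⟩
        exacts [Or.inl h, Or.inr h]
      have hAs1d := sidearc hji1 hside1 hΩd hIod
      have hcross : ∃ y ∈ B l, KminusC5Arc t s1 y := by
        rcases hside1 with h | h
        · obtain ⟨a, ha, bb, hbb, hab⟩ := hlink j l hjl
          rw [h, Finset.mem_singleton] at ha
          exact ⟨bb, (hsh l).io_subset hbb, ha ▸ hab⟩
        · obtain ⟨a, ha, bb, hbb, hab⟩ := hlink l j (Ne.symm hjl)
          rw [h, Finset.mem_singleton] at hbb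
          exact ⟨a, (hsh l).omega_subset ha, KArc_symm (hbb ▸ hab)⟩
      obtain ⟨y, hyl, hAs1y⟩ := hcross
      have hs15 : s1.val < 5 := (hCmem _).mp (hjC hs1mem)
      have hu15 : u1.val < 5 := (hCmem _).mp (hjC hu1mem)
      have hy5 : y.val < 5 := (hCmem _).mp (hlC hyl)
      have hu1d : u1 ≠ d := hne hji1 hu1mem hdmem
      have hu1y : u1 ≠ y := hne hjl hu1mem hyl
      have hdy : d ≠ y := hne (Ne.symm hli1) hdmem hyl
      exact L2 hs15 hu15 hd5 hy5 hu1d hu1y hdy hAsu1 hAs1d hAs1y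
    · -- exactly one of the two pairs lies inside the cycle
      have hnb : ¬((B j ∩ C).card = 2 ∧ (B l ∩ C).card = 2) := hboth
      rcases (by omega : ((B j ∩ C).card = 2 ∧ 2 ≤ Sing.card) ∨
          ((B l ∩ C).card = 2 ∧ 2 ≤ Sing.card)) with ⟨hc2, hn1⟩ | ⟨hc2, hn1⟩
      · obtain ⟨i1, hi1, i2, hi2, h12⟩ := Finset.one_lt_card.mp (show 1 < Sing.card by omega)
        exact pairarg j i1 i2 (hsingne i1 hi1 j hjBig) (hsingne i2 hi2 j hjBig) h12
          (by omega) (subC j (by omega)) hi1 hi2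
      · obtain ⟨i1, hi1, i2, hi2, h12⟩ := Finset.one_lt_card.mp (show 1 < Sing.card by omega)
        exact pairarg l i1 i2 (hsingne i1 hi1 l hlBig) (hsingne i2 hi2 l hlBig) h12
          (by omega) (subC l (by omega)) hi1 hi2

def Inv (t : ℕ) (D : Digr (Fin (t+2))) : Prop :=
  ∃ B Ω Io : Fin (t+2) → Finset (Fin (t+2)),
    (∀ x ∈ D.verts, Shape t (Ω x) (Io x) (B x)) ∧
    (∀ x ∈ D.verts, ∀ y ∈ D.verts, x ≠ y → Disjoint (B x) (B y)) ∧
    (∀ x y, D.Arc x y → x ∈ D.verts ∧ y ∈ D.verts ∧ x ≠ y ∧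
      ∃ a ∈ Ω x, ∃ b ∈ Io y, KminusC5Arc t a b)

lemma inv_init : Inv t ⟨Set.univ, KminusC5Arc t⟩ :=
  ⟨fun x => {x}, fun x => {x}, fun x => {x},
    fun x _ => Shape.base x,
    fun x _ y _ hxy => Finset.disjoint_singleton.mpr hxy,
    fun x y h => ⟨trivial, trivial, h.1,
      x, Finset.mem_singleton_self x, y, Finset.mem_singleton_self y, h⟩⟩

lemma inv_step {D D' : Digr (Fin (t+2))} (h : ButterflyStep D D') (hI : Inv t D) :
    Inv t D' := by
  classical
  obtain ⟨B, Ω, Io, hSh, hDis, hArc⟩ := hI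
  rcases h with ⟨v, rfl⟩ | ⟨u, v, huv, rfl⟩ | ⟨u, v, hbc, rfl⟩
  · -- delete a vertex
    refine ⟨B, Ω, Io, ?_, ?_, ?_⟩
    · intro x hx; exact hSh x hx.1
    · intro x hx y hy hxy; exact hDis x hx.1 y hy.1 hxy
    · rintro x y ⟨hxy, hxv, hyv⟩
      obtain ⟨h1, h2, h3, h4⟩ := hArc x y hxy
      exact ⟨⟨h1, by simpa using hxv⟩, ⟨h2, by simpa using hyv⟩, h3, h4⟩
  · -- delete an arc
    refine ⟨B, Ω, Io, hSh, hDis, ?_⟩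
    rintro x y ⟨hxy, -⟩
    exact hArc x y hxy
  · -- contract a butterfly-contractible arc
    obtain ⟨hArcuv, hune, hcase⟩ := hbc
    obtain ⟨huV, hvV, -, hlinkuv⟩ := hArc u v hArcuv
    have hBdisj : Disjoint (B u) (B v) := hDis u huV v hvV hune
    rcases hcase with hout | hin
    · -- v is the unique out-neighbour of u
      refine ⟨fun x => if x = u then B u ∪ B v else B x,
          fun x => if x = u then Ω v else Ω x,
          fun x => if x = u then Io u ∪ Io v else Io x, ?_, ?_, ?_⟩
      · intro x hx
        by_cases hxu : x = u
        · simp only [if_pos hxu]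
          exact Shape.step1 (hSh u huV) (hSh v hvV) hBdisj hlinkuv
        · simp only [if_neg hxu]
          exact hSh x hx.1
      · intro x hx y hy hxy
        have hxV : x ∈ D.verts := hx.1
        have hyV : y ∈ D.verts := hy.1
        have hxv : x ≠ v := by simpa using hx.2
        have hyv : y ≠ v := by simpa using hy.2
        have hgen : ∀ z, z ∈ D.verts → z ≠ v → z ≠ u → Disjoint (B u ∪ B v) (B z) :=
          fun z hzV hzv hzu => Finset.disjoint_union_left.mpr
            ⟨hDis u huV z hzV (Ne.symm hzu), hDis v hvV z hzV (Ne.symm hzv)⟩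
        by_cases hxu : x = u
        · have hyu : y ≠ u := fun hh => hxy (hxu.trans hh.symm)
          simp only [if_pos hxu, if_neg hyu]
          exact hgen y hyV hyv hyu
        · by_cases hyu : y = u
          · simp only [if_neg hxu, if_pos hyu]
            exact (hgen x hxV hxv hxu).symm
          · simp only [if_neg hxu, if_neg hyu]
            exact hDis x hxV y hyV hxy
      · rintro x y ⟨hxv, hyv, hxy, hcases⟩
        rcases hcases with h | ⟨hxu, h⟩ | ⟨hyu, h⟩
        · obtain ⟨hxV, hyV, -, a, ha, bb, hbb, hab⟩ := hArc x y h
          have hxu : x ≠ u := fun heq => hyv (hout y (heq ▸ h))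
          refine ⟨⟨hxV, by simpa using hxv⟩, ⟨hyV, by simpa using hyv⟩, hxy, ?_⟩
          simp only [if_neg hxu]
          by_cases hyu : y = u
          · simp only [if_pos hyu]
            rw [hyu] at hbb
            exact ⟨a, ha, bb, Finset.mem_union_left _ hbb, hab⟩
          · simp only [if_neg hyu]
            exact ⟨a, ha, bb, hbb, hab⟩
        · obtain ⟨-, hyV, -, a, ha, bb, hbb, hab⟩ := hArc v y h
          have hyu : y ≠ u := fun heq => hxy (hxu.trans heq.symm)
          refine ⟨⟨by rw [hxu]; exact huV, by simpa using hxv⟩,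
            ⟨hyV, by simpa using hyv⟩, hxy, ?_⟩
          simp only [if_pos hxu, if_neg hyu]
          exact ⟨a, ha, bb, hbb, hab⟩
        · obtain ⟨hxV, -, -, a, ha, bb, hbb, hab⟩ := hArc x v h
          have hxu : x ≠ u := fun heq => hxy (heq.trans hyu.symm)
          refine ⟨⟨hxV, by simpa using hxv⟩,
            ⟨by rw [hyu]; exact huV, by simpa using hyv⟩, hxy, ?_⟩
          simp only [if_neg hxu, if_pos hyu]
          exact ⟨a, ha, bb, Finset.mem_union_right _ hbb, hab⟩
    · -- u is the unique in-neighbour of v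
      refine ⟨fun x => if x = u then B u ∪ B v else B x,
          fun x => if x = u then Ω u ∪ Ω v else Ω x,
          fun x => if x = u then Io u else Io x, ?_, ?_, ?_⟩
      · intro x hx
        by_cases hxu : x = u
        · simp only [if_pos hxu]
          exact Shape.step2 (hSh u huV) (hSh v hvV) hBdisj hlinkuv
        · simp only [if_neg hxu]
          exact hSh x hx.1
      · intro x hx y hy hxy
        have hxV : x ∈ D.verts := hx.1
        have hyV : y ∈ D.verts := hy.1
        have hxv : x ≠ v := by simpa using hx.2
        have hyv : y ≠ v := by simpa using hy.2
        have hgen : ∀ z, z ∈ D.verts → z ≠ v → z ≠ u → Disjoint (B u ∪ B v) (B z) :=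
          fun z hzV hzv hzu => Finset.disjoint_union_left.mpr
            ⟨hDis u huV z hzV (Ne.symm hzu), hDis v hvV z hzV (Ne.symm hzv)⟩
        by_cases hxu : x = u
        · have hyu : y ≠ u := fun hh => hxy (hxu.trans hh.symm)
          simp only [if_pos hxu, if_neg hyu]
          exact hgen y hyV hyv hyu
        · by_cases hyu : y = u
          · simp only [if_neg hxu, if_pos hyu]
            exact (hgen x hxV hxv hxu).symm
          · simp only [if_neg hxu, if_neg hyu]
            exact hDis x hxV y hyV hxy
      · rintro x y ⟨hxv, hyv, hxy, hcases⟩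
        rcases hcases with h | ⟨hxu, h⟩ | ⟨hyu, h⟩
        · obtain ⟨hxV, hyV, -, a, ha, bb, hbb, hab⟩ := hArc x y h
          refine ⟨⟨hxV, by simpa using hxv⟩, ⟨hyV, by simpa using hyv⟩, hxy, ?_⟩
          by_cases hxu : x = u
          · have hyu : y ≠ u := fun heq => hxy (hxu.trans heq.symm)
            simp only [if_pos hxu, if_neg hyu]
            rw [hxu] at ha
            exact ⟨a, Finset.mem_union_left _ ha, bb, hbb, hab⟩
          · by_cases hyu : y = u
            · simp only [if_neg hxu, if_pos hyu]
              rw [hyu] at hbb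
              exact ⟨a, ha, bb, hbb, hab⟩
            · simp only [if_neg hxu, if_neg hyu]
              exact ⟨a, ha, bb, hbb, hab⟩
        · obtain ⟨-, hyV, -, a, ha, bb, hbb, hab⟩ := hArc v y h
          have hyu : y ≠ u := fun heq => hxy (hxu.trans heq.symm)
          refine ⟨⟨by rw [hxu]; exact huV, by simpa using hxv⟩,
            ⟨hyV, by simpa using hyv⟩, hxy, ?_⟩
          simp only [if_pos hxu, if_neg hyu]
          exact ⟨a, Finset.mem_union_right _ ha, bb, hbb, hab⟩
        · exact absurd (hin x h) (fun heq => hxy (heq.trans hyu.symm))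

lemma inv_rtg {D D' : Digr (Fin (t+2))}
    (h : Relation.ReflTransGen ButterflyStep D D') (hI : Inv t D) : Inv t D' := by
  induction h with
  | refl => exact hI
  | tail _ hstep ih => exact inv_step hstep ih

lemma no_bfm (ht : 3 ≤ t) :
    ¬ IsButterflyMinor (⟨Set.univ, KminusC5Arc t⟩ : Digr (Fin (t + 2)))
      (fun a b : Fin t => a ≠ b) := by
  rintro ⟨D', hrtg, φ, hinj, hmem, harc⟩
  obtain ⟨B, Ω, Io, hSh, hDis, hArc⟩ := inv_rtg hrtg inv_init
  exact core ht (fun i => B (φ i)) (fun i => Ω (φ i)) (fun i => Io (φ i))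
    (fun i => hSh _ (hmem i))
    (fun i j hij => hDis _ (hmem i) _ (hmem j) (fun h => hij (hinj h)))
    (fun i j hij => (hArc _ _ (harc i j hij)).2.2.2)

/-- The explicit acyclic `t`-colouring. -/
lemma upper (ht : 3 ≤ t) : DiColorable (KminusC5Arc t) t := by
  have h3 : ∀ v : Fin (t+2),
      (if v.val ≤ 1 then 0 else if v.val ≤ 3 then 1 else if v.val = 4 then 2 else v.val - 2)
        < t := by
    intro v
    have := v.isLt
    split_ifs <;> omega
  refine ⟨fun v => ⟨_, h3 v⟩, ?_⟩
  intro c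
  rintro ⟨u, v, hu, hv, huv, -⟩
  obtain ⟨hne, hnot⟩ := huv
  apply hnot
  have hval : (if u.val ≤ 1 then 0 else if u.val ≤ 3 then 1 else if u.val = 4 then 2
        else u.val - 2)
      = (if v.val ≤ 1 then 0 else if v.val ≤ 3 then 1 else if v.val = 4 then 2
        else v.val - 2) :=
    congrArg Fin.val ((hu.2 : _ = c).trans (hv.2 : _ = c).symm)
  have hne' : u.val ≠ v.val := fun h => hne (Fin.ext h)
  have hu2 := u.isLt
  have hv2 := v.isLt
  split_ifs at hval <;> omega

lemma lower (ht : 3 ≤ t) (k : ℕ) (hcol : DiColorable (KminusC5Arc t) k) : t ≤ k := by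
  classical
  obtain ⟨f, hf⟩ := hcol
  have hsame : ∀ u v : Fin (t+2), u ≠ v → f u = f v →
      (u.val < 5 ∧ v.val < 5) ∧ ((u.val+1) % 5 = v.val ∨ (v.val+1) % 5 = u.val) := by
    intro u v hne hfe
    by_contra hcon
    have hA : KminusC5Arc t u v := ⟨hne, hcon⟩
    exact hf (f u) ⟨u, v, ⟨trivial, rfl⟩, ⟨trivial, hfe.symm⟩, hA,
      Relation.ReflTransGen.single ⟨⟨trivial, hfe.symm⟩, ⟨trivial, rfl⟩, KArc_symm hA⟩⟩
  set Cyc := (Finset.univ : Finset (Fin (t+2))).filter (fun v => v.val < 5) with hCy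
  set Bigv := (Finset.univ : Finset (Fin (t+2))).filter (fun v => ¬ v.val < 5) with hBv
  have hCycmem : ∀ x : Fin (t+2), x ∈ Cyc ↔ x.val < 5 := by intro x; simp [hCy]
  have hBigmem : ∀ x : Fin (t+2), x ∈ Bigv ↔ ¬ x.val < 5 := by intro x; simp [hBv]
  have hinjB : Set.InjOn f Bigv := by
    intro x hx y hy hfe
    by_contra hne
    have h := hsame x y hne hfe
    exact ((hBigmem x).mp hx) h.1.1
  have hcardB : (Bigv.image f).card = Bigv.card := Finset.card_image_of_injOn hinjB
  have hfiber : ∀ c : Fin k, (Cyc.filter (fun v => f v = c)).card ≤ 2 := by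
    intro c
    by_contra hgt
    push_neg at hgt
    obtain ⟨x, y, z, hx, hy, hz, hxy, hxz, hyz⟩ := Finset.two_lt_card_iff.mp hgt
    simp only [Finset.mem_filter] at hx hy hz
    have h1 := hsame x y hxy (hx.2.trans hy.2.symm)
    have h2 := hsame y z hyz (hy.2.trans hz.2.symm)
    have h3 := hsame x z hxz (hx.2.trans hz.2.symm)
    have hxv : x.val < 5 := h1.1.1
    have hyv : y.val < 5 := h1.1.2
    have hzv : z.val < 5 := h2.1.2
    have hxyv : x.val ≠ y.val := fun h => hxy (Fin.ext h)
    have hxzv : x.val ≠ z.val := fun h => hxz (Fin.ext h)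
    have hyzv : y.val ≠ z.val := fun h => hyz (Fin.ext h)
    have c1 := h1.2
    have c2 := h2.2
    have c3 := h3.2
    omega
  have hcover : Cyc.card ≤ 2 * (Cyc.image f).card := by
    calc Cyc.card = ∑ c ∈ Cyc.image f, (Cyc.filter (fun v => f v = c)).card :=
        Finset.card_eq_sum_card_fiberwise (fun x hx => Finset.mem_image_of_mem f hx)
      _ ≤ ∑ _c ∈ Cyc.image f, 2 := Finset.sum_le_sum (fun c _ => hfiber c)
      _ = 2 * (Cyc.image f).card := by rw [Finset.sum_const, smul_eq_mul, mul_comm]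
  have hdisj : Disjoint (Cyc.image f) (Bigv.image f) := by
    rw [Finset.disjoint_left]
    rintro c hc hc2
    obtain ⟨x, hx, rfl⟩ := Finset.mem_image.mp hc
    obtain ⟨y, hy, hfe⟩ := Finset.mem_image.mp hc2
    have hne : y ≠ x := by
      intro h
      exact ((hBigmem y).mp hy) (h ▸ (hCycmem x).mp hx)
    exact ((hBigmem y).mp hy) (hsame y x hne hfe).1.1
  have htot : (Cyc.image f).card + (Bigv.image f).card ≤ k := by
    rw [← Finset.card_union_of_disjoint hdisj]
    calc ((Cyc.image f) ∪ (Bigv.image f)).card ≤ (Finset.univ : Finset (Fin k)).card :=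
        Finset.card_le_card (Finset.subset_univ _)
      _ = k := by simp
  have h5 : Cyc.card = 5 := cardC ht
  have hsplit : Cyc.card + Bigv.card = t + 2 := by
    have h := Finset.card_filter_add_card_filter_not
      (s := (Finset.univ : Finset (Fin (t+2)))) (p := fun v : Fin (t+2) => v.val < 5)
    rw [← hCy] at h
    rw [show (Finset.filter (fun v : Fin (t+2) => ¬ v.val < 5) Finset.univ) = Bigv from rfl] at h
    simpa using h
  omega

lemma dichrom (ht : 3 ≤ t) : diChromaticNumber (KminusC5Arc t) = (t : ℕ∞) := by
  apply le_antisymm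
  · exact sInf_le ⟨t, rfl, upper ht⟩
  · apply le_sInf
    rintro n ⟨k, rfl, hcol⟩
    exact_mod_cast lower ht k hcol

end St7

/-- For `t ≥ 3`, the biorientation `D` of the complete graph on `t + 2`
vertices minus a `5`-cycle has dichromatic number exactly `t`, but `D` does not contain the
bioriented complete graph `↔K_t` as a butterfly minor. -/
theorem dichromatic_eq_and_no_butterflyMinor (t : ℕ) (ht : 3 ≤ t) :
    diChromaticNumber (KminusC5Arc t) = (t : ℕ∞) ∧
    ¬ IsButterflyMinor (⟨Set.univ, KminusC5Arc t⟩ : Digr (Fin (t + 2)))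
        (fun a b : Fin t => a ≠ b) :=
  ⟨St7.dichrom ht, St7.no_bfm ht⟩
end

section
/- If a digraph D contains a strong minor model of a digraph F in which every vertex of F has total degree (in-degree plus out-degree) at most 3 and in-degree at most 2 and out-degree at most 2, then D contains a subdivision of F. -/
/-- `l` is a directed path in `(V, A)` from `x` to `y` (a list of distinct vertices
following arcs of `A`). -/
def IsDiPath {V : Type*} (A : V → V → Prop) (l : List V) (x y : V) : Prop :=
  List.Chain' A l ∧ l.Nodup ∧ l.head? = some x ∧ l.getLast? = some y

/-! Every vertex of `F` has in-degree or out-degree at most one, so each branch set `X w` contains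
a spider: a centre `b w` with paths from the entry points of the arcs into `X w` to `b w` and
from `b w` to the exit points of the arcs out of `X w`, pairwise meeting only in `b w`. With one
entry `y` and two exits `x₁, x₂`, take paths `p : y → x₁` and `q : y → x₂` inside `X w` and let
`b w` be the last vertex of `q` lying on `p`; the case of two entries and one exit follows by
reversing all arcs. An arc `(u, v)` of `F` is then routed from `b u` along a leg of the spider
at `u`, across an arc of `D` from `X u` to `X v`, and along a leg of the spider at `v` to `b v`. -/
theorem List.exists_eq_append_cons_forall_not {α : Type*} {p : α → Prop} :
    ∀ {l : List α}, (∃ a ∈ l, p a) → ∃ s b t, l = s ++ b :: t ∧ p b ∧ ∀ z ∈ t, ¬ p z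
  | [], ⟨_, ha, _⟩ => absurd ha List.not_mem_nil
  | a :: l, h => by
    by_cases hl : ∃ a ∈ l, p a
    · obtain ⟨s, b, t, rfl, hb, ht⟩ := List.exists_eq_append_cons_forall_not hl
      exact ⟨a :: s, b, t, rfl, hb, ht⟩
    · obtain ⟨c, hc, hpc⟩ := h
      refine ⟨[], a, l, rfl, ?_, fun z hz hpz => hl ⟨z, hz, hpz⟩⟩
      rcases List.mem_cons.1 hc with rfl | hc
      · exact hpc
      · exact absurd ⟨c, hc, hpc⟩ hl

namespace IsDiPath

variable {V : Type*} {R : V → V → Prop} {l p q : List V} {a b c d z : V}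

theorem singleton (a : V) : IsDiPath R [a] a a :=
  ⟨List.isChain_singleton a, List.nodup_singleton a, rfl, rfl⟩

theorem head_mem (h : IsDiPath R l a c) : a ∈ l :=
  List.mem_of_mem_head? h.2.2.1

theorem reverse (h : IsDiPath R l a c) : IsDiPath (flip R) l.reverse c a :=
  ⟨List.isChain_reverse.2 h.1, List.nodup_reverse.2 h.2.1,
    by rw [List.head?_reverse]; exact h.2.2.2, by rw [List.getLast?_reverse]; exact h.2.2.1⟩

theorem append (hp : IsDiPath R p a b) (hq : IsDiPath R q c d) (hbc : R b c)
    (hpq : p.Disjoint q) : IsDiPath R (p ++ q) a d := by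
  obtain ⟨hpc, hpn, hph, hpl⟩ := hp
  obtain ⟨hqc, hqn, hqh, hql⟩ := hq
  refine ⟨List.IsChain.append hpc hqc ?_, List.nodup_append'.2 ⟨hpn, hqn, hpq⟩, ?_, ?_⟩
  · rw [hpl, hqh]
    simpa using hbc
  · rw [List.head?_append, hph]; rfl
  · rw [List.getLast?_append, hql]; rfl

theorem split (h : IsDiPath R (p ++ b :: q) a c) :
    IsDiPath R (p ++ [b]) a b ∧ IsDiPath R (b :: q) b c := by
  obtain ⟨hch, hn, hh, hl⟩ := h
  obtain ⟨hc₁, hc₂⟩ := List.isChain_split.1 hch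
  refine ⟨⟨hc₁, ?_, ?_, by simp⟩, ⟨hc₂, hn.sublist (List.sublist_append_right _ _), rfl, ?_⟩⟩
  · exact hn.sublist (by simp)
  · cases p <;> simpa using hh
  · simpa [List.getLast?_append] using hl

theorem ne_of_mem_tail (h : IsDiPath R l a c) (hz : z ∈ l.tail) : z ≠ a := by
  obtain ⟨l, rfl⟩ := List.head?_eq_some_iff.1 h.2.2.1
  rintro rfl
  exact (List.nodup_cons.1 h.2.1).1 hz

theorem ne_of_mem_dropLast (h : IsDiPath R l a c) (hz : z ∈ l.dropLast) : z ≠ c :=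
  h.reverse.ne_of_mem_tail (by rwa [List.tail_reverse, List.mem_reverse])

theorem mem_tail_dropLast_append (hp : IsDiPath R p a b) (hq : IsDiPath R q c d)
    (hz : z ∈ (p ++ q).tail.dropLast) : (z ∈ p ∧ z ≠ a) ∨ (z ∈ q ∧ z ≠ d) := by
  obtain ⟨p', rfl⟩ := List.head?_eq_some_iff.1 hp.2.2.1
  have hq₀ : q ≠ [] := by rintro rfl; exact absurd hq.2.2.1 (by simp)
  rw [List.cons_append, List.tail_cons, List.dropLast_append_of_ne_nil hq₀] at hz
  rcases List.mem_append.1 hz with hz | hz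
  · exact .inl ⟨List.mem_cons_of_mem a hz, hp.ne_of_mem_tail hz⟩
  · exact .inr ⟨List.mem_of_mem_dropLast hz, hq.ne_of_mem_dropLast hz⟩

theorem exists_tripod {y x₁ x₂ : V} (hp : IsDiPath R p y x₁) (hq : IsDiPath R q y x₂) :
    ∃ b P Q₁ Q₂, IsDiPath R P y b ∧ IsDiPath R Q₁ b x₁ ∧ IsDiPath R Q₂ b x₂ ∧
      P ⊆ p ∧ Q₁ ⊆ p ∧ Q₂ ⊆ q ∧
      (∀ z ∈ P, z ∈ Q₁ → z = b) ∧ (∀ z ∈ P, z ∈ Q₂ → z = b) ∧ (∀ z ∈ Q₁, z ∈ Q₂ → z = b) := by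
  -- `b` is the last vertex of `q` on `p`
  obtain ⟨s, b, t, rfl, hbp, ht⟩ :=
    List.exists_eq_append_cons_forall_not (p := (· ∈ p)) ⟨y, hq.head_mem, hp.head_mem⟩
  have hQ₂ : ∀ z ∈ p, z ∈ b :: t → z = b := fun z hzp hz =>
    (List.mem_cons.1 hz).resolve_right fun hzt => ht z hzt hzp
  obtain ⟨p₁, p₂, rfl⟩ := List.append_of_mem hbp
  have hP : p₁ ++ [b] ⊆ p₁ ++ b :: p₂ := by simp
  have hQ₁ : b :: p₂ ⊆ p₁ ++ b :: p₂ := by simp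
  refine ⟨b, p₁ ++ [b], b :: p₂, b :: t, hp.split.1, hp.split.2, hq.split.2,
    hP, hQ₁, by simp, fun z hz₁ hz₂ => ?_,
    fun z hz => hQ₂ z (hP hz), fun z hz => hQ₂ z (hQ₁ hz)⟩
  rcases List.mem_append.1 hz₁ with hz₁ | hz₁
  · exact absurd hz₂ ((List.nodup_append'.1 hp.2.1).2.2 hz₁)
  · simpa using hz₁

end IsDiPath

theorem exists_isDiPath_of_reflTransGen {V : Type*} {R : V → V → Prop} {x y : V}
    (h : Relation.ReflTransGen R x y) : ∃ l, IsDiPath R l x y := by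
  induction h with
  | refl => exact ⟨[x], .singleton x⟩
  | @tail b c _ hbc ih =>
    obtain ⟨l, hl⟩ := ih
    by_cases hc : c ∈ l
    · obtain ⟨s, t, rfl⟩ := List.append_of_mem hc
      exact ⟨s ++ [c], hl.split.1⟩
    · refine ⟨l ++ [c], hl.append (.singleton c) hbc ?_⟩
      simpa using hc

namespace SConnOn

variable {V : Type*} {A : V → V → Prop} {S : Set V}

theorem exists_isDiPath (hS : SConnOn A S) {x y : V} (hx : x ∈ S) (hy : y ∈ S) :
    ∃ l, IsDiPath A l x y ∧ ∀ z ∈ l, z ∈ S := by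
  obtain ⟨l, hch, hn, hh, hl⟩ := exists_isDiPath_of_reflTransGen (hS x hx y hy)
  refine ⟨l, ⟨hch.imp fun _ _ h => h.2.2, hn, hh, hl⟩, ?_⟩
  refine List.IsChain.induction (· ∈ S) l hch (fun _ _ h _ => h.2.1) fun hl₀ => ?_
  rwa [(List.head_eq_iff_head?_eq_some hl₀).2 hh]

theorem flip (hS : SConnOn A S) : SConnOn (flip A) S := fun u hu v hv =>
  Relation.ReflTransGen.mono (fun _ _ h => ⟨h.2.1, h.1, h.2.2⟩) _ _
    (Relation.ReflTransGen.swap _ _ (hS v hv u hu))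

end SConnOn

theorem ENat.le_one_or_le_one_of_add_le_three {a b : ℕ∞} (h : a + b ≤ 3) : a ≤ 1 ∨ b ≤ 1 := by
  induction a using ENat.recTopCoe <;> induction b using ENat.recTopCoe <;> simp_all
  norm_cast at *
  omega

theorem Set.exists_subset_singleton_of_encard_le_one {α : Type*} [Nonempty α] {s : Set α}
    (h : s.encard ≤ 1) : ∃ a, s ⊆ {a} := by
  rcases Set.encard_le_one_iff_eq.1 h with rfl | ⟨a, rfl⟩
  · exact ⟨Classical.arbitrary α, Set.empty_subset _⟩
  · exact ⟨a, subset_rfl⟩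

theorem Set.exists_subset_pair_of_encard_le_two {α : Type*} [Nonempty α] {s : Set α}
    (h : s.encard ≤ 2) : ∃ a b, s ⊆ {a, b} := by
  rcases s.eq_empty_or_nonempty with rfl | ⟨a, ha⟩
  · exact ⟨Classical.arbitrary α, Classical.arbitrary α, Set.empty_subset _⟩
  have hs : (s \ {a}).encard ≤ 1 := by
    rw [← ENat.add_le_add_iff_right ENat.one_ne_top, Set.encard_sdiff_singleton_add_one ha]
    exact h
  obtain ⟨b, hb⟩ := Set.exists_subset_singleton_of_encard_le_one hs
  refine ⟨a, b, fun z hz => ?_⟩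
  by_cases hza : z = a
  · exact .inl hza
  · exact .inr (hb ⟨hz, hza⟩)

structure IsSpider {V ι κ : Type*} (A : V → V → Prop) (S : Set V) (b : V) (ins : Set ι)
    (outs : Set κ) (y : ι → V) (x : κ → V) (I : ι → List V) (O : κ → List V) : Prop where
  center_mem : b ∈ S
  isDiPath_in : ∀ i ∈ ins, IsDiPath A (I i) (y i) b
  isDiPath_out : ∀ j ∈ outs, IsDiPath A (O j) b (x j)
  in_subset : ∀ i ∈ ins, ∀ z ∈ I i, z ∈ S
  out_subset : ∀ j ∈ outs, ∀ z ∈ O j, z ∈ S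
  in_in : ∀ i ∈ ins, ∀ i' ∈ ins, i ≠ i' → ∀ z ∈ I i, z ∈ I i' → z = b
  out_out : ∀ j ∈ outs, ∀ j' ∈ outs, j ≠ j' → ∀ z ∈ O j, z ∈ O j' → z = b
  in_out : ∀ i ∈ ins, ∀ j ∈ outs, ∀ z ∈ I i, z ∈ O j → z = b

namespace IsSpider

variable {V ι κ : Type*} {A : V → V → Prop} {S : Set V} {b : V} {ins : Set ι} {outs : Set κ}
  {y : ι → V} {x : κ → V}

theorem reverse {I : ι → List V} {O : κ → List V}
    (h : IsSpider (flip A) S b ins outs y x I O) :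
    IsSpider A S b outs ins x y (fun j => (O j).reverse) (fun i => (I i).reverse) where
  center_mem := h.center_mem
  isDiPath_in j hj := (h.isDiPath_out j hj).reverse
  isDiPath_out i hi := (h.isDiPath_in i hi).reverse
  in_subset j hj z hz := h.out_subset j hj z (List.mem_reverse.1 hz)
  out_subset i hi z hz := h.in_subset i hi z (List.mem_reverse.1 hz)
  in_in j hj j' hj' hne z hz hz' :=
    h.out_out j hj j' hj' hne z (List.mem_reverse.1 hz) (List.mem_reverse.1 hz')
  out_out i hi i' hi' hne z hz hz' :=
    h.in_in i hi i' hi' hne z (List.mem_reverse.1 hz) (List.mem_reverse.1 hz')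
  in_out j hj i hi z hz hz' :=
    h.in_out i hi j hj z (List.mem_reverse.1 hz') (List.mem_reverse.1 hz)

theorem exists_of_subset_singleton_of_subset_pair (hS : SConnOn A S) (hy : ∀ i, y i ∈ S)
    (hx : ∀ j, x j ∈ S) {i₀ : ι} {j₁ j₂ : κ} (hins : ins ⊆ {i₀}) (houts : outs ⊆ {j₁, j₂}) :
    ∃ b I O, IsSpider A S b ins outs y x I O := by
  classical
  obtain ⟨p, hp, hpS⟩ := hS.exists_isDiPath (hy i₀) (hx j₁)
  obtain ⟨q, hq, hqS⟩ := hS.exists_isDiPath (hy i₀) (hx j₂)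
  obtain ⟨b, P, Q₁, Q₂, hP, hQ₁, hQ₂, hPp, hQ₁p, hQ₂q, hPQ₁, hPQ₂, hQ₁₂⟩ := hp.exists_tripod hq
  refine ⟨b, fun _ => P, fun j => if j = j₁ then Q₁ else Q₂,
    hpS b (hQ₁p hQ₁.head_mem), fun i hi => ?_, fun j hj => ?_, fun _ _ z hz => hpS z (hPp hz),
    fun j _ z hz => ?_, fun i hi i' hi' hne => ?_, fun j hj j' hj' hne z hz hz' => ?_,
    fun _ _ j _ z hz hz' => ?_⟩
  · rw [hins hi]
    exact hP
  · split_ifs with h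
    · exact h ▸ hQ₁
    · rw [(houts hj).resolve_left h]
      exact hQ₂
  · split_ifs at hz
    exacts [hpS z (hQ₁p hz), hqS z (hQ₂q hz)]
  · exact absurd ((hins hi).trans (hins hi').symm) hne
  · have hj₂ : ∀ {k}, k ∈ outs → k ≠ j₁ → k = j₂ := fun hk hk₁ => (houts hk).resolve_left hk₁
    by_cases h : j = j₁ <;> by_cases h' : j' = j₁
    · exact absurd (h.trans h'.symm) hne
    · rw [if_pos h] at hz
      rw [if_neg h'] at hz'
      exact hQ₁₂ z hz hz'
    · rw [if_neg h] at hz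
      rw [if_pos h'] at hz'
      exact hQ₁₂ z hz' hz
    · exact absurd ((hj₂ hj h).trans (hj₂ hj' h').symm) hne
  · split_ifs at hz'
    exacts [hPQ₁ z hz hz', hPQ₂ z hz hz']

theorem exists_of_encard_le [Nonempty ι] [Nonempty κ] (hS : SConnOn A S) (hy : ∀ i, y i ∈ S)
    (hx : ∀ j, x j ∈ S) (hins : ins.encard ≤ 2) (houts : outs.encard ≤ 2)
    (hsum : ins.encard + outs.encard ≤ 3) :
    ∃ b I O, IsSpider A S b ins outs y x I O := by
  rcases ENat.le_one_or_le_one_of_add_le_three hsum with hins₁ | houts₁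
  · obtain ⟨i₀, hi₀⟩ := Set.exists_subset_singleton_of_encard_le_one hins₁
    obtain ⟨j₁, j₂, hj⟩ := Set.exists_subset_pair_of_encard_le_two houts
    exact exists_of_subset_singleton_of_subset_pair hS hy hx hi₀ hj
  · obtain ⟨j₀, hj₀⟩ := Set.exists_subset_singleton_of_encard_le_one houts₁
    obtain ⟨i₁, i₂, hi⟩ := Set.exists_subset_pair_of_encard_le_two hins
    obtain ⟨b, I, O, h⟩ := exists_of_subset_singleton_of_subset_pair hS.flip hx hy hj₀ hi
    exact ⟨b, _, _, h.reverse⟩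

end IsSpider

def IsSubdivision {V W : Type*} (A : V → V → Prop) (B : W → W → Prop) (b : W → V)
    (P : W → W → List V) : Prop :=
  Function.Injective b ∧
    (∀ u v, B u v → IsDiPath A (P u v) (b u) (b v)) ∧
    (∀ u v, B u v → ∀ x ∈ (P u v).tail.dropLast, ∀ w, x ≠ b w) ∧
    (∀ u v u' v', B u v → B u' v' → (u, v) ≠ (u', v') →
      ∀ x ∈ (P u v).tail.dropLast, x ∉ (P u' v').tail.dropLast)

open Function in
theorem isSubdivision_of_spiders {V W : Type*} {A : V → V → Prop} {B : W → W → Prop}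
    {X : W → Set V} (hX : Pairwise (Disjoint on X)) (hB : ∀ w, ¬ B w w) {a c : W → W → V}
    (hac : ∀ u v, B u v → A (a u v) (c u v)) {b : W → V} {I O : W → W → List V}
    (hspider : ∀ w, IsSpider A (X w) (b w) {u | B u w} {v | B w v} (c · w) (a w ·) (I w) (O w)) :
    IsSubdivision A B b (fun u v => O u v ++ I v u) := by
  have hX' : ∀ {z w w'}, z ∈ X w → z ∈ X w' → w = w' := fun hz hz' =>
    by_contra fun hne => Set.disjoint_left.1 (hX hne) hz hz'
  have hint : ∀ u v, B u v → ∀ z ∈ (O u v ++ I v u).tail.dropLast,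
      (z ∈ X u ∧ z ∈ O u v ∧ z ≠ b u) ∨ (z ∈ X v ∧ z ∈ I v u ∧ z ≠ b v) := fun u v huv z hz =>
    (((hspider u).isDiPath_out v huv).mem_tail_dropLast_append
      ((hspider v).isDiPath_in u huv) hz).imp
      (fun h => ⟨(hspider u).out_subset v huv z h.1, h⟩)
      (fun h => ⟨(hspider v).in_subset u huv z h.1, h⟩)
  refine ⟨fun w w' h => hX' (hspider w).center_mem (h ▸ (hspider w').center_mem),
    fun u v huv => ?_, fun u v huv z hz w => ?_, fun u v u' v' huv hu'v' hne z hz hz' => ?_⟩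
  · refine ((hspider u).isDiPath_out v huv).append ((hspider v).isDiPath_in u huv) (hac u v huv)
      fun z hzO hzI => ?_
    exact Set.disjoint_left.1 (hX fun h : u = v => hB v (h ▸ huv))
      ((hspider u).out_subset v huv z hzO) ((hspider v).in_subset u huv z hzI)
  · rintro rfl
    rcases hint u v huv _ hz with ⟨hzX, -, hne⟩ | ⟨hzX, -, hne⟩ <;>
      exact hne (by rw [hX' (hspider w).center_mem hzX])
  · rcases hint u v huv z hz with ⟨hzX, hzO, hzb⟩ | ⟨hzX, hzI, hzb⟩ <;>
      rcases hint u' v' hu'v' z hz' with ⟨hzX', hzO', -⟩ | ⟨hzX', hzI', -⟩ <;>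
      obtain rfl := hX' hzX hzX'
    · exact hzb ((hspider u).out_out v huv v' hu'v' (by rintro rfl; exact hne rfl) z hzO hzO')
    · exact hzb ((hspider u).in_out u' hu'v' v huv z hzI' hzO)
    · exact hzb ((hspider v).in_out u huv v' hu'v' z hzI hzO')
    · exact hzb ((hspider v).in_in u huv u' hu'v' (by rintro rfl; exact hne rfl) z hzI hzI')

/-- If a digraph `D = (V, A)` contains a strong minor model of a (loopless)
digraph `F = (W, B)` in which every vertex has in-degree at most `2`, out-degree at most `2`
and total degree at most `3`, then `D` contains a subdivision of `F`: injective branch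
vertices `b`, and for every arc `(u, v)` of `F` a directed path in `D` from `b u` to `b v`,
such that these paths are internally vertex-disjoint and internally avoid all branch
vertices. -/
theorem subdivision_of_strongMinor_subcubic {V W : Type*}
    (A : V → V → Prop) (B : W → W → Prop)
    (hB_loopless : ∀ w, ¬ B w w)
    (hdeg : ∀ w : W, {y | B w y}.encard ≤ 2 ∧ {x | B x w}.encard ≤ 2 ∧
      {y | B w y}.encard + {x | B x w}.encard ≤ 3)
    (h : IsStrongMinor A B) :
    ∃ (b : W → V) (P : W → W → List V),
      Function.Injective b ∧
      (∀ u v, B u v → IsDiPath A (P u v) (b u) (b v)) ∧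
      (∀ u v, B u v → ∀ x ∈ (P u v).tail.dropLast, ∀ w, x ≠ b w) ∧
      (∀ u v u' v', B u v → B u' v' → (u, v) ≠ (u', v') →
        ∀ x ∈ (P u v).tail.dropLast, x ∉ (P u' v').tail.dropLast) := by
  obtain ⟨X, hXne, hXdisj, hXconn, hXarc⟩ := h
  have hports : ∀ u v, ∃ e : V × V, e.1 ∈ X u ∧ e.2 ∈ X v ∧ (B u v → A e.1 e.2) := by
    intro u v
    by_cases huv : B u v
    · obtain ⟨x, hx, y, hy, hxy⟩ := hXarc u v huv
      exact ⟨(x, y), hx, hy, fun _ => hxy⟩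
    · exact ⟨((hXne u).some, (hXne v).some), (hXne u).some_mem, (hXne v).some_mem,
        fun h => absurd h huv⟩
  choose e he using hports
  have hspider : ∀ w, ∃ b I O, IsSpider A (X w) b {u | B u w} {v | B w v}
      (fun u => (e u w).2) (fun v => (e w v).1) I O := fun w =>
    have : Nonempty W := ⟨w⟩
    IsSpider.exists_of_encard_le (hXconn w) (fun u => (he u w).2.1) (fun v => (he w v).1)
      (hdeg w).2.1 (hdeg w).1 (by rw [add_comm]; exact (hdeg w).2.2)
  choose b I O hspider using hspider
  exact ⟨b, _, isSubdivision_of_spiders (fun _ _ => hXdisj _ _) hB_loopless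
    (fun u v => (he u v).2.2) hspider⟩
end

section
/- Let D be a strongly connected digraph, v_1 a vertex, and v_2, v_3 two further vertices. Then there exist a vertex b and directed paths P_1 from v_1 to b, P_2 from b to v_2, and P_3 from b to v_3 in D such that P_1, P_2, P_3 are pairwise internally vertex-disjoint and internally avoid {v_1, v_2, v_3, b} as appropriate (i.e., they only share the vertex b, and P_1 ends where P_2, P_3 begin). -/
/-- The digraph `(V, A)` is strongly connected. -/
def StronglyConnected {V : Type*} (A : V → V → Prop) : Prop :=
  ∀ u v : V, Relation.ReflTransGen A u v

/-!
Take a directed path `P` from `v₁` to `v₂` and a directed path `R` from `v₁` to `v₃`, and let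
`b` be the last vertex of `R` that lies on `P`. Splitting `P` at `b` gives `P₁` and `P₂`, and the
part of `R` after `b` is a path `P₃` meeting `P` only in `b`. If `v₃` lies on `P`, then `b = v₃`
and `P₃` is the trivial path.
-/

theorem List.exists_cons_suffix_forall_not {α : Type*} {p : α → Prop} {l : List α}
    (h : ∃ x ∈ l, p x) : ∃ b t, b :: t <:+ l ∧ p b ∧ ∀ x ∈ t, ¬ p x := by
  induction l with
  | nil => simp at h
  | cons a l ih =>
    by_cases hl : ∀ x ∈ l, ¬ p x
    · obtain ⟨x, hx, hpx⟩ := h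
      rcases List.mem_cons.1 hx with rfl | hx
      · exact ⟨x, l, List.suffix_refl _, hpx, hl⟩
      · exact absurd hpx (hl x hx)
    · obtain ⟨b, t, hsuf, hb, ht⟩ := ih (by simpa using hl)
      exact ⟨b, t, hsuf.trans (l.suffix_cons a), hb, ht⟩

namespace IsDiPath

variable {V : Type*} {A : V → V → Prop} {l : List V} {x y z : V}

theorem isChain (h : IsDiPath A l x y) : l.IsChain A := h.1

theorem nodup (h : IsDiPath A l x y) : l.Nodup := h.2.1

theorem head?_eq (h : IsDiPath A l x y) : l.head? = some x := h.2.2.1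

theorem getLast?_eq (h : IsDiPath A l x y) : l.getLast? = some y := h.2.2.2

theorem eq_cons (h : IsDiPath A l x y) : l = x :: l.tail :=
  List.eq_cons_of_mem_head? h.head?_eq

theorem eq_dropLast_append (h : IsDiPath A l x y) : l = l.dropLast ++ [y] :=
  (List.dropLast_append_getLast? y h.getLast?_eq).symm

theorem head_mem_s16 (h : IsDiPath A l x y) : x ∈ l :=
  List.mem_of_mem_head? h.head?_eq

theorem last_mem (h : IsDiPath A l x y) : y ∈ l :=
  List.mem_of_mem_getLast? h.getLast?_eq

theorem ne_head_of_mem_tail (h : IsDiPath A l x y) (hz : z ∈ l.tail) : z ≠ x := by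
  rintro rfl
  have hnd := h.nodup
  rw [h.eq_cons, List.nodup_cons] at hnd
  exact hnd.1 hz

theorem last_eq_head_or_mem_tail (h : IsDiPath A l x y) : y = x ∨ y ∈ l.tail :=
  List.mem_cons.1 (h.eq_cons ▸ h.last_mem)

theorem ne_last_of_mem_tail_dropLast (h : IsDiPath A l x y) (hz : z ∈ l.tail.dropLast) :
    z ≠ y := by
  rintro rfl
  have hnd := h.nodup
  rw [h.eq_dropLast_append, List.nodup_append] at hnd
  rw [← List.tail_dropLast] at hz
  exact hnd.2.2 z (List.mem_of_mem_tail hz) z (List.mem_singleton_self z) rfl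

theorem of_suffix (h : IsDiPath A l x y) {b : V} {t : List V} (hsuf : b :: t <:+ l) :
    IsDiPath A (b :: t) b y :=
  ⟨h.isChain.suffix hsuf, h.nodup.sublist hsuf.sublist, rfl, by
    obtain ⟨s, rfl⟩ := hsuf
    rw [← h.getLast?_eq, List.getLast?_append_of_ne_nil s (List.cons_ne_nil b t)]⟩

theorem of_prefix (h : IsDiPath A l x y) {s : List V} {b : V} (hpre : s ++ [b] <+: l) :
    IsDiPath A (s ++ [b]) x b :=
  ⟨h.isChain.prefix hpre, h.nodup.sublist hpre.sublist, by
    obtain ⟨t, rfl⟩ := hpre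
    simpa [List.head?_append] using h.head?_eq, List.getLast?_concat⟩

theorem _root_.Relation.ReflTransGen.exists_isDiPath (h : Relation.ReflTransGen A x y) :
    ∃ l, IsDiPath A l x y := by
  induction h using Relation.ReflTransGen.head_induction_on with
  | refl => exact ⟨[y], List.isChain_singleton y, List.nodup_singleton y, rfl, rfl⟩
  | @head x z hxz _ ih =>
    obtain ⟨l, hl⟩ := ih
    by_cases hx : x ∈ l
    · obtain ⟨s, t, rfl⟩ := List.append_of_mem hx
      exact ⟨x :: t, hl.of_suffix ⟨s, rfl⟩⟩
    · refine ⟨x :: l, List.isChain_cons.2 ⟨?_, hl.isChain⟩, List.nodup_cons.2 ⟨hx, hl.nodup⟩,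
        rfl, ?_⟩
      · intro w hw
        rw [hl.head?_eq, Option.mem_some_iff] at hw
        exact hw ▸ hxz
      · rw [List.getLast?_cons, hl.getLast?_eq]; rfl

end IsDiPath

section Tripod

variable {V : Type*} (A : V → V → Prop)

def IsTripod (v₁ v₂ v₃ b : V) (P₁ P₂ P₃ : List V) : Prop :=
  IsDiPath A P₁ v₁ b ∧ IsDiPath A P₂ b v₂ ∧ IsDiPath A P₃ b v₃ ∧
    (∀ x ∈ P₁.tail.dropLast,
      x ∉ P₂.tail.dropLast ∧ x ∉ P₃.tail.dropLast ∧ x ∉ ({v₁, v₂, v₃, b} : Set V)) ∧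
    (∀ x ∈ P₂.tail.dropLast,
      x ∉ P₃.tail.dropLast ∧ x ∉ ({v₁, v₂, v₃, b} : Set V)) ∧
    (∀ x ∈ P₃.tail.dropLast, x ∉ ({v₁, v₂, v₃, b} : Set V))

variable {A}

theorem isTripod_of_disjoint {v₁ v₂ v₃ b : V} {P₁ P₂ P₃ : List V}
    (h₁ : IsDiPath A P₁ v₁ b) (h₂ : IsDiPath A P₂ b v₂) (h₃ : IsDiPath A P₃ b v₃)
    (h₁₂ : ∀ x ∈ P₁, x ∉ P₂.tail) (h₃₁₂ : ∀ x ∈ P₃.tail, x ∉ P₁ ∧ x ∉ P₂) :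
    IsTripod A v₁ v₂ v₃ b P₁ P₂ P₃ := by
  -- `v₂` and `v₃` are either `b` or lie on the tails of `P₂`, `P₃`, which the other paths avoid.
  have hv₂ := h₂.last_eq_head_or_mem_tail
  have hv₃ := h₃.last_eq_head_or_mem_tail
  simp only [IsTripod, Set.mem_insert_iff, Set.mem_singleton_iff, not_or]
  refine ⟨h₁, h₂, h₃, fun x hx => ?_, fun x hx => ?_, fun x hx => ?_⟩
  · have hxt := List.dropLast_subset _ hx
    have hxP₁ := List.mem_of_mem_tail hxt
    have hxb := h₁.ne_last_of_mem_tail_dropLast hx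
    refine ⟨fun h => h₁₂ x hxP₁ (List.dropLast_subset _ h),
      fun h => (h₃₁₂ x (List.dropLast_subset _ h)).1 hxP₁,
      h₁.ne_head_of_mem_tail hxt, ?_, ?_, hxb⟩
    · rintro rfl
      exact hv₂.elim hxb (h₁₂ x hxP₁)
    · rintro rfl
      exact hv₃.elim hxb (fun h => (h₃₁₂ x h).1 hxP₁)
  · have hxt := List.dropLast_subset _ hx
    have hxP₂ := List.mem_of_mem_tail hxt
    have hxb := h₂.ne_head_of_mem_tail hxt
    refine ⟨fun h => (h₃₁₂ x (List.dropLast_subset _ h)).2 hxP₂,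
      fun h => h₁₂ x (h ▸ h₁.head_mem_s16) hxt, h₂.ne_last_of_mem_tail_dropLast hx, ?_, hxb⟩
    rintro rfl
    exact hv₃.elim hxb (fun h => (h₃₁₂ x h).2 hxP₂)
  · obtain ⟨hxP₁, hxP₂⟩ := h₃₁₂ x (List.dropLast_subset _ hx)
    exact ⟨fun h => hxP₁ (h ▸ h₁.head_mem_s16), fun h => hxP₂ (h ▸ h₂.last_mem),
      h₃.ne_last_of_mem_tail_dropLast hx, fun h => hxP₁ (h ▸ h₁.last_mem)⟩

end Tripod

theorem exists_tripod_general {V : Type*} (A : V → V → Prop) (hsc : StronglyConnected A)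
    (v₁ v₂ v₃ : V) :
    ∃ (b : V) (P₁ P₂ P₃ : List V),
      IsDiPath A P₁ v₁ b ∧ IsDiPath A P₂ b v₂ ∧ IsDiPath A P₃ b v₃ ∧
      (∀ x ∈ P₁.tail.dropLast,
        x ∉ P₂.tail.dropLast ∧ x ∉ P₃.tail.dropLast ∧ x ∉ ({v₁, v₂, v₃, b} : Set V)) ∧
      (∀ x ∈ P₂.tail.dropLast,
        x ∉ P₃.tail.dropLast ∧ x ∉ ({v₁, v₂, v₃, b} : Set V)) ∧
      (∀ x ∈ P₃.tail.dropLast, x ∉ ({v₁, v₂, v₃, b} : Set V)) := by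
  obtain ⟨P, hP⟩ := (hsc v₁ v₂).exists_isDiPath
  obtain ⟨R, hR⟩ := (hsc v₁ v₃).exists_isDiPath
  obtain ⟨b, S, hSR, hbP, hSP⟩ :=
    List.exists_cons_suffix_forall_not (p := (· ∈ P)) ⟨v₁, hR.head_mem_s16, hP.head_mem_s16⟩
  obtain ⟨s, t, rfl⟩ := List.append_of_mem hbP
  have hnd : (s ++ [b] ++ t).Nodup := by simpa using hP.nodup
  refine ⟨b, s ++ [b], b :: t, b :: S, isTripod_of_disjoint (hP.of_prefix ⟨t, by simp⟩)
    (hP.of_suffix ⟨s, rfl⟩) (hR.of_suffix hSR) (fun x hx => List.disjoint_of_nodup_append hnd hx)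
    (fun x hx => by grind)⟩

/-- In a strongly connected digraph, for distinct vertices `v₁, v₂, v₃`
there are a vertex `b` and directed paths `P₁ : v₁ → b`, `P₂ : b → v₂`, `P₃ : b → v₃`
which are pairwise internally vertex-disjoint and whose internal vertices avoid
`{v₁, v₂, v₃, b}`; in particular the paths share only the vertex `b`. -/
theorem exists_tripod {V : Type*} (A : V → V → Prop) (hsc : StronglyConnected A)
    (v₁ v₂ v₃ : V) (h12 : v₁ ≠ v₂) (h13 : v₁ ≠ v₃) (h23 : v₂ ≠ v₃) :
    ∃ (b : V) (P₁ P₂ P₃ : List V),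
      IsDiPath A P₁ v₁ b ∧ IsDiPath A P₂ b v₂ ∧ IsDiPath A P₃ b v₃ ∧
      (∀ x ∈ P₁.tail.dropLast,
        x ∉ P₂.tail.dropLast ∧ x ∉ P₃.tail.dropLast ∧ x ∉ ({v₁, v₂, v₃, b} : Set V)) ∧
      (∀ x ∈ P₂.tail.dropLast,
        x ∉ P₃.tail.dropLast ∧ x ∉ ({v₁, v₂, v₃, b} : Set V)) ∧
      (∀ x ∈ P₃.tail.dropLast, x ∉ ({v₁, v₂, v₃, b} : Set V)) :=
  exists_tripod_general A hsc v₁ v₂ v₃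
end

section
/- In any digraph, contracting a butterfly-contractible arc preserves butterfly-contractibility: if e and f are distinct butterfly-contractible arcs of a digraph D that do not share a head or tail creating interference (specifically, if f is butterfly-contractible in D and remains an arc of D/e), then f is butterfly-contractible in D/e, where D/e denotes the contraction of e. -/
/-- Contracting a butterfly-contractible arc preserves
butterfly-contractibility: if `e = (u, v)` and `f = (x, y)` are butterfly-contractible arcs
of `D` which share no head or tail (so `f` remains an arc of `D/e`), then `f` is
butterfly-contractible in the contraction `D/e`. -/
theorem bflyContractible_contract {V : Type*} (D : Digr V) (u v x y : V)
    (he : D.BflyContractible u v) (hf : D.BflyContractible x y)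
    (hxu : x ≠ u) (hxv : x ≠ v) (hyu : y ≠ u) (hyv : y ≠ v)
    (hf' : (D.contract u v).Arc x y) :
    (D.contract u v).BflyContractible x y := by
  obtain ⟨hxy, hne, hcase⟩ := hf
  refine ⟨hf', hne, ?_⟩
  rcases hcase with h | h
  · left
    rintro z ⟨-, hzv, hxz, harc | ⟨hxu', -⟩ | ⟨hzu, hxv'⟩⟩
    · exact h z harc
    · exact absurd hxu' hxu
    · exact absurd (h v hxv') hyv.symm
  · right
    rintro z ⟨hzv, -, hzy, harc | ⟨hzu, hvy⟩ | ⟨hyu', -⟩⟩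
    · exact h z harc
    · exact absurd (h v hvy) hxv.symm
    · exact absurd hyu' hyu
end
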